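/- arXiv:1012.4696 — 5 statements merged into one kernel-verified Lean document; each statement's English description precedes it below -/
import Mathlib

section
/- Let W be a finite-dimensional real inner product space, U ∈ W unit, F skew-symmetric with FU = 0 and F² = -id + ⟨·,U⟩U. Let v₁,…,v₂q ∈ W and linear forms s₁,…,s₂q : W → ℝ with sᵢ(y) = ⟨vᵢ, y⟩ for all y (each sᵢ is represented by vᵢ). Suppose c·Fx = Σᵢ sᵢ(x)·vᵢ for all x ∈ W and dim W - 1 > 2q. Then c = 0. -/
open RealInnerProductSpace

theorem stmt9 {W : Type*} [NormedAddCommGroup W] [InnerProductSpace ℝ W]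
    [FiniteDimensional ℝ W]
    (U : W) (hUnorm : ‖U‖ = 1)
    (F : W →ₗ[ℝ] W) (hskew : ∀ x y : W, ⟪F x, y⟫ = -⟪x, F y⟫)
    (hFU : F U = 0)
    (hF2 : ∀ x : W, F (F x) = -x + ⟪x, U⟫ • U)
    (q : ℕ) (v : Fin (2 * q) → W) (s : Fin (2 * q) → W →ₗ[ℝ] ℝ)
    (hs : ∀ i, ∀ y : W, s i y = ⟪v i, y⟫)
    (c : ℝ)
    (h : ∀ x : W, c • F x = ∑ i, s i x • v i)
    (hdim : 2 * q + 1 < Module.finrank ℝ W) :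
    c = 0 := by
  classical
  -- the span of U and the v i has small dimension
  set w : Fin (2 * q + 1) → W := Fin.snoc v U with hw
  set K : Submodule ℝ W := Submodule.span ℝ (Set.range w) with hK
  have hKfin : Module.finrank ℝ K < Module.finrank ℝ W := by
    refine lt_of_le_of_lt ?_ hdim
    refine (finrank_span_le_card _).trans ?_
    rw [Set.toFinset_range]
    exact Finset.card_image_le.trans (by simp)
  -- there is a nonzero vector orthogonal to K
  have hKtop : Kᗮ ≠ ⊥ := by
    intro hbot
    have := K.finrank_add_finrank_orthogonal
    rw [hbot, finrank_bot] at this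
    omega
  obtain ⟨y, hyK, hy0⟩ := Submodule.exists_mem_ne_zero_of_ne_bot hKtop
  have horth : ∀ z ∈ K, ⟪z, y⟫ = 0 := fun z hz => by
    exact hyK z hz
  have hvy : ∀ i, ⟪v i, y⟫ = 0 := fun i =>
    horth _ (Submodule.subset_span ⟨Fin.castSucc i, by simp [hw]⟩)
  have hUy : ⟪U, y⟫ = 0 :=
    horth _ (Submodule.subset_span ⟨Fin.last _, by simp [hw]⟩)
  -- take inner product of the hypothesis at x = F y with y
  have h1 : ⟪c • F (F y), y⟫ = ⟪∑ i, s i (F y) • v i, y⟫ := by rw [h (F y)]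
  rw [sum_inner] at h1
  have hrhs : (∑ i, ⟪s i (F y) • v i, y⟫) = 0 := by
    apply Finset.sum_eq_zero
    intro i _
    rw [real_inner_smul_left, hvy i, mul_zero]
  rw [hrhs, hF2 y, real_inner_smul_left] at h1
  have hy2 : ⟪y, U⟫ = 0 := by rwa [real_inner_comm] at hUy
  rw [inner_add_left, inner_neg_left, real_inner_smul_left, hy2, hUy] at h1
  have hyn : ⟪y, y⟫ ≠ 0 := fun hc => hy0 (inner_self_eq_zero.mp hc)
  have : c * ⟪y, y⟫ = 0 := by linarith [h1]
  exact (mul_eq_zero.mp this).resolve_right hyn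
end

section
/- Let W be a real inner product space, F : W → W skew-symmetric, U ∈ W, and for each a = 1,…,q let A_a, A_{a*} : W → W be symmetric endomorphisms and s_a, s_{a*} : W → ℝ linear forms satisfying A_{a*}x = F A_a x - s_a(x)U and A_a x = -F A_{a*} x + s_{a*}(x)U. Then ⟨(A_a F + F A_a)x, y⟩ = ⟨y,U⟩ s_a(x) - ⟨x,U⟩ s_a(y) for all x, y ∈ W. -/
open RealInnerProductSpace

theorem stmt10 {W : Type*} [NormedAddCommGroup W] [InnerProductSpace ℝ W]
    (F : W →ₗ[ℝ] W) (hskew : ∀ x y : W, ⟪F x, y⟫ = -⟪x, F y⟫)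
    (U : W)
    (Aa Aas : W →ₗ[ℝ] W)
    (hAa : ∀ x y : W, ⟪Aa x, y⟫ = ⟪x, Aa y⟫)
    (hAas : ∀ x y : W, ⟪Aas x, y⟫ = ⟪x, Aas y⟫)
    (sa sas : W →ₗ[ℝ] ℝ)
    (h1 : ∀ x : W, Aas x = F (Aa x) - sa x • U)
    (h2 : ∀ x : W, Aa x = -F (Aas x) + sas x • U) :
    ∀ x y : W, ⟪Aa (F x) + F (Aa x), y⟫ = ⟪y, U⟫ * sa x - ⟪x, U⟫ * sa y := by
  intro x y
  have key := hAas x y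
  rw [h1 x, h1 y] at key
  simp only [inner_sub_left, inner_sub_right, real_inner_smul_left,
    real_inner_smul_right] at key
  have hx : ⟪x, F (Aa y)⟫ = -⟪Aa (F x), y⟫ := by
    have := hskew x (Aa y)
    have h' := hAa (F x) y
    linarith [hskew x (Aa y), hAa (F x) y, real_inner_comm (F x) (Aa y),
      real_inner_comm x (F (Aa y))]
  have hUy : ⟪U, y⟫ = ⟪y, U⟫ := (real_inner_comm U y).symm
  rw [inner_add_left]
  rw [hUy] at key
  linarith [key, hx, mul_comm (sa x) (⟪y,U⟫ : ℝ), mul_comm (sa y) (⟪x,U⟫ : ℝ)]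
end

section
/- Let W be a real inner product space, F : W → W skew-symmetric, U ∈ W, A_{a*}, A_a symmetric endomorphisms and s_{a*} a linear form with A_a x = -F A_{a*}x + s_{a*}(x)U for all x. Then ⟨(A_{a*} F + F A_{a*})x, y⟩ = ⟨y,U⟩ s_{a*}(x) - ⟨x,U⟩ s_{a*}(y) for all x, y ∈ W. -/
open RealInnerProductSpace

theorem stmt11 {W : Type*} [NormedAddCommGroup W] [InnerProductSpace ℝ W]
    (F : W →ₗ[ℝ] W) (hskew : ∀ x y : W, ⟪F x, y⟫ = -⟪x, F y⟫)
    (U : W)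
    (Aa Aas : W →ₗ[ℝ] W)
    (hAa : ∀ x y : W, ⟪Aa x, y⟫ = ⟪x, Aa y⟫)
    (hAas : ∀ x y : W, ⟪Aas x, y⟫ = ⟪x, Aas y⟫)
    (sas : W →ₗ[ℝ] ℝ)
    (h2 : ∀ x : W, Aa x = -F (Aas x) + sas x • U) :
    ∀ x y : W, ⟪Aas (F x) + F (Aas x), y⟫ = ⟪y, U⟫ * sas x - ⟪x, U⟫ * sas y := by
  have hF : ∀ z, F (Aas z) = sas z • U - Aa z := by
    intro z; rw [h2 z]; abel
  intro x y
  rw [inner_add_left, hAas (F x) y, hskew x (Aas y), hF, hF,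
    inner_sub_left, inner_sub_right, inner_smul_left, inner_smul_right,
    real_inner_comm y U]
  have := hAa x y
  simp only [starRingEnd_apply, star_trivial]
  linarith
end

section
/- Abstract version of Theorem 5's algebraic core: Let W be a real inner product space of dim ≥ 3, U ∈ W unit, F skew-symmetric with FU = 0, F² = -id + ⟨·,U⟩U. Let c ∈ ℝ and for a = 1,…,q let A_a, A_{a*} be symmetric endomorphisms and s_a, s_{a*} linear forms satisfying: (i) A_{a*} = F∘A_a - s_a(·)U; (ii) A_a = -F∘A_{a*} + s_{a*}(·)U; (iii) A_a∘F = -A_{a*} and A_{a*}∘F = A_a; (iv) the Codazzi identity 0 = c(⟨x,U⟩Fy - ⟨y,U⟩Fx - 2⟨Fx,y⟩U) + Σ_a (s_a(x)A_a y - s_a(y)A_a x) + Σ_a (s_{a*}(x)A_{a*}y - s_{a*}(y)A_{a*}x) for all x,y. Then s_a = 0, s_{a*} = 0 for all a, and c = 0. -/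
open RealInnerProductSpace

theorem stmt12 {W : Type*} [NormedAddCommGroup W] [InnerProductSpace ℝ W]
    [FiniteDimensional ℝ W] (hdim : 3 ≤ Module.finrank ℝ W)
    (U : W) (hUnorm : ‖U‖ = 1)
    (F : W →ₗ[ℝ] W) (hskew : ∀ x y : W, ⟪F x, y⟫ = -⟪x, F y⟫)
    (hFU : F U = 0)
    (hF2 : ∀ x : W, F (F x) = -x + ⟪x, U⟫ • U)
    (c : ℝ) (q : ℕ)
    (Aa Aas : Fin q → W →ₗ[ℝ] W)
    (hAa : ∀ a, ∀ x y : W, ⟪Aa a x, y⟫ = ⟪x, Aa a y⟫)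
    (hAas : ∀ a, ∀ x y : W, ⟪Aas a x, y⟫ = ⟪x, Aas a y⟫)
    (sa sas : Fin q → W →ₗ[ℝ] ℝ)
    (h1 : ∀ a, ∀ x : W, Aas a x = F (Aa a x) - sa a x • U)
    (h2 : ∀ a, ∀ x : W, Aa a x = -F (Aas a x) + sas a x • U)
    (h3 : ∀ a, ∀ x : W, Aa a (F x) = -(Aas a x))
    (h3' : ∀ a, ∀ x : W, Aas a (F x) = Aa a x)
    (hcod : ∀ x y : W,
      0 = c • (⟪x, U⟫ • F y - ⟪y, U⟫ • F x - (2 * ⟪F x, y⟫) • U)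
        + ∑ a, (sa a x • Aa a y - sa a y • Aa a x)
        + ∑ a, (sas a x • Aas a y - sas a y • Aas a x)) :
    (∀ a, sa a = 0) ∧ (∀ a, sas a = 0) ∧ c = 0 := by
  have hUU : ⟪U, U⟫ = (1:ℝ) := by
    rw [real_inner_self_eq_norm_sq, hUnorm]; norm_num
  have hAasU : ∀ a, Aas a U = 0 := by
    intro a
    have h := h3 a U
    rw [hFU, map_zero] at h
    exact (neg_eq_zero.mp h.symm)
  have hAaU : ∀ a, Aa a U = 0 := by
    intro a
    have h := h3' a U
    rw [hFU, map_zero] at h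
    exact h.symm
  have hsa : ∀ a, sa a = 0 := by
    intro a
    ext x
    have h := congrArg (fun z => ⟪z, U⟫) (h1 a x)
    simp only [inner_sub_left, real_inner_smul_left, hUU, mul_one] at h
    have e1 : ⟪Aas a x, U⟫ = 0 := by rw [hAas a x U, hAasU, inner_zero_right]
    have e2 : ⟪F (Aa a x), U⟫ = 0 := by
      rw [hskew, hFU, inner_zero_right, neg_zero]
    rw [e1, e2] at h
    simpa using h.symm
  have hsas : ∀ a, sas a = 0 := by
    intro a
    ext x
    have h := congrArg (fun z => ⟪z, U⟫) (h2 a x)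
    simp only [inner_add_left, inner_neg_left, real_inner_smul_left, hUU, mul_one] at h
    have e1 : ⟪Aa a x, U⟫ = 0 := by rw [hAa a x U, hAaU, inner_zero_right]
    have e2 : ⟪F (Aas a x), U⟫ = 0 := by
      rw [hskew, hFU, inner_zero_right, neg_zero]
    rw [e1, e2] at h
    simpa using h.symm
  refine ⟨hsa, hsas, ?_⟩
  -- pick y not in the span of U
  have hne : (Submodule.span ℝ {U} : Submodule ℝ W) ≠ ⊤ := by
    intro htop
    have h1' : Module.finrank ℝ W ≤ 1 := by
      have := finrank_span_le_card (R := ℝ) ({U} : Set W)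
      simp only [Set.toFinset_singleton, Finset.card_singleton] at this
      calc Module.finrank ℝ W
          = Module.finrank ℝ (Submodule.span ℝ ({U} : Set W)) := by
            rw [htop]; exact (finrank_top ℝ W).symm
        _ ≤ 1 := this
    omega
  obtain ⟨y, hy⟩ : ∃ y : W, y ∉ Submodule.span ℝ {U} := by
    by_contra hcon
    push_neg at hcon
    exact hne (eq_top_iff.mpr fun z _ => hcon z)
  have hFy : F y ≠ 0 := by
    intro h0
    have := hF2 y
    rw [h0, map_zero] at this
    have : y = ⟪y, U⟫ • U := by
      rwa [eq_comm, neg_add_eq_zero] at this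
    exact hy (this ▸ Submodule.smul_mem _ _ (Submodule.mem_span_singleton_self U))
  have h := hcod U y
  simp only [hsa, hsas, LinearMap.zero_apply, zero_smul, sub_zero, zero_sub, neg_zero,
    Finset.sum_const_zero, add_zero, hFU, hUU, one_smul, smul_zero,
    inner_zero_left, mul_zero] at h
  have h' : (0:W) = c • F y := by simpa using h
  rcases smul_eq_zero.mp h'.symm with hc | hFy0
  · exact hc
  · exact absurd hFy0 hFy
end

section
/- Let W be a real inner product space, F skew-symmetric with FU = 0 for some unit U ∈ W, and suppose for symmetric A_a and linear form s_a we have (F∘A_a + A_a∘F)x = s_a(x)U together with ⟨(A_aF + FA_a)x, y⟩ = ⟨y,U⟩s_a(x) - ⟨x,U⟩s_a(y) for all x,y. Then s_a(y) = 0 for all y ∈ W. -/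
open RealInnerProductSpace

theorem stmt13 {W : Type*} [NormedAddCommGroup W] [InnerProductSpace ℝ W]
    (U : W) (hUnorm : ‖U‖ = 1)
    (F : W →ₗ[ℝ] W) (hskew : ∀ x y : W, ⟪F x, y⟫ = -⟪x, F y⟫)
    (hFU : F U = 0)
    (Aa : W →ₗ[ℝ] W) (hAa : ∀ x y : W, ⟪Aa x, y⟫ = ⟪x, Aa y⟫)
    (sa : W →ₗ[ℝ] ℝ)
    (h1 : ∀ x : W, F (Aa x) + Aa (F x) = sa x • U)
    (h2 : ∀ x y : W, ⟪Aa (F x) + F (Aa x), y⟫ = ⟪y, U⟫ * sa x - ⟪x, U⟫ * sa y) :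
    ∀ y : W, sa y = 0 := by
  intro y
  have key := h2 U y
  rw [show Aa (F U) + F (Aa U) = F (Aa U) + Aa (F U) from add_comm _ _, h1 U,
    real_inner_smul_left] at key
  have hUU : ⟪U, U⟫ = 1 := by
    rw [real_inner_self_eq_norm_sq, hUnorm]; norm_num
  rw [hUU, real_inner_comm] at key
  linarith
end
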